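/- Let P be a normal program and M an answer set of P. Define the valuation V by V(l) = 1 if l ∈ M and V(l) = 0 otherwise. Then there is a possibility distribution π ∈ S_{(P,V)} such that for every l ∈ Lit_P, V(l) = N(l) (i.e., N(l) = 1 if l ∈ M and N(l) = 0 otherwise). -/
import Mathlib


open Classical

namespace PASP

/-- An interpretation assigns a truth value to each atom. -/
abbrev Interp (A : Type) := A → Bool

/-- A literal is an atom with a sign (`true` = positive, `false` = classical negation). -/
abbrev Lit (A : Type) := A × Bool

/-- A possibility distribution on interpretations. -/
abbrev PossDist (A : Type) := Interp A → ℝ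

variable {A : Type}

def litSat (ω : Interp A) (l : Lit A) : Prop := ω l.1 = l.2

def IsPossDist (π : PossDist A) : Prop := ∀ ω, 0 ≤ π ω ∧ π ω ≤ 1

noncomputable def poss (π : PossDist A) (p : Interp A → Prop) : ℝ :=
  sSup {x | ∃ ω, p ω ∧ π ω = x}

noncomputable def nec (π : PossDist A) (p : Interp A → Prop) : ℝ :=
  1 - poss π fun ω => ¬ p ω

noncomputable def necLit (π : PossDist A) (l : Lit A) : ℝ :=
  nec π fun ω => litSat ω l

def Consistent (M : Set (Lit A)) : Prop :=
  ∀ a : A, ¬ ((a, true) ∈ M ∧ (a, false) ∈ M)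

/-- A simple rule `l₀ ← l₁,…,l_m`; a head `none` stands for `⊥` (constraint rule). -/
structure SimpleRule (A : Type) where
  head : Option (Lit A)
  body : Finset (Lit A)

/-- A consistent set of literals `I` is a model of a simple rule if the head is in `I`
whenever the body is contained in `I` (for a constraint rule the body must not be
contained in `I`). -/
def ruleModel (I : Set (Lit A)) (r : SimpleRule A) : Prop :=
  (↑r.body : Set (Lit A)) ⊆ I → ∃ l, r.head = some l ∧ l ∈ I

/-- Models of a simple program: the consistent sets of literals that are models of all
rules, together with the set of all literals itself. -/
def IsModel (P : Set (SimpleRule A)) (I : Set (Lit A)) : Prop :=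
  (Consistent I ∧ ∀ r ∈ P, ruleModel I r) ∨ I = Set.univ

/-- An answer set of a simple program is a minimal model with respect to set inclusion. -/
def IsAnswerSet (P : Set (SimpleRule A)) (I : Set (Lit A)) : Prop :=
  IsModel P I ∧ ∀ J, IsModel P J → J ⊆ I → J = I

/-- Necessity of the head of a simple rule (`N(⊥) = 1 - Π(⊤)` for constraint rules). -/
noncomputable def headNec (π : PossDist A) : Option (Lit A) → ℝ
  | some l => necLit π l
  | none => nec π fun _ => False

/-- `min(N(l₁),…,N(l_m))`, where the minimum of the empty list is 1. -/
noncomputable def minBody (π : PossDist A) (B : Finset (Lit A)) : ℝ :=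
  sInf (insert 1 (necLit π '' (↑B : Set (Lit A))))

/-- The constraint `N(l₀) ≥ min(N(l₁),…,N(l_m))` imposed by a simple rule. -/
def simpleConstraint (π : PossDist A) (r : SimpleRule A) : Prop :=
  minBody π r.body ≤ headNec π r.head

/-- The possibilistic models of a simple program. -/
def possModels (P : Set (SimpleRule A)) : Set (PossDist A) :=
  {π | IsPossDist π ∧ ∀ r ∈ P, simpleConstraint π r}

/-- `π` is a minimally specific element of `S`: it belongs to `S` and no pointwise
greater element of `S` differs from it. -/
def MinSpecific (S : Set (PossDist A)) (π : PossDist A) : Prop :=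
  π ∈ S ∧ ∀ π' ∈ S, π ≤ π' → π' = π

/-- A normal rule `l₀ ← l₁,…,l_m, not l_{m+1},…, not l_n`; head `none` stands for `⊥`. -/
structure NormalRule (A : Type) where
  head : Option (Lit A)
  pos : Finset (Lit A)
  neg : Finset (Lit A)

/-- The Gelfond–Lifschitz reduct of a normal program with respect to a set of literals. -/
def reduct (P : Set (NormalRule A)) (I : Set (Lit A)) : Set (SimpleRule A) :=
  {s | ∃ r ∈ P, (∀ l ∈ r.neg, l ∉ I) ∧ s = ⟨r.head, r.pos⟩}

/-- `M` is an answer set of the normal program `P` when it is an answer set of the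
simple program `P^M`. -/
def NormalAnswerSet (P : Set (NormalRule A)) (M : Set (Lit A)) : Prop :=
  IsAnswerSet (reduct P M) M

/-- A valuation maps every literal into `[0,1]`. -/
def IsVal (V : Lit A → ℝ) : Prop := ∀ l, 0 ≤ V l ∧ V l ≤ 1

/-- `min(1 − V(l_{m+1}),…,1 − V(l_n))`, with the empty minimum equal to 1. -/
noncomputable def minNeg (V : Lit A → ℝ) (B : Finset (Lit A)) : ℝ :=
  sInf (insert 1 ((fun l => 1 - V l) '' (↑B : Set (Lit A))))

/-- The constraint `N(l₀) ≥ min(N(l₁),…,N(l_m), 1−V(l_{m+1}),…,1−V(l_n))` induced by a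
normal rule and a valuation `V`. -/
def normalConstraint (π : PossDist A) (V : Lit A → ℝ) (r : NormalRule A) : Prop :=
  min (minBody π r.pos) (minNeg V r.neg) ≤ headNec π r.head

/-- The possibility distributions satisfying all constraints induced by `P` and `V`. -/
def possModelsV (P : Set (NormalRule A)) (V : Lit A → ℝ) : Set (PossDist A) :=
  {π | IsPossDist π ∧ ∀ r ∈ P, normalConstraint π V r}


section Aux

variable {A : Type}

lemma poss_nonneg {π : PossDist A} (h : ∀ ω, 0 ≤ π ω) (p : Interp A → Prop) :
    0 ≤ poss π p :=
  Real.sSup_nonneg (by rintro x ⟨ω, _, rfl⟩; exact h ω)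

lemma poss_le {π : PossDist A} {p : Interp A → Prop} {a : ℝ} (h0 : 0 ≤ a)
    (h : ∀ ω, p ω → π ω ≤ a) : poss π p ≤ a :=
  Real.sSup_le (by rintro x ⟨ω, hω, rfl⟩; exact h ω hω) h0

lemma le_poss {π : PossDist A} (h1 : ∀ ω, π ω ≤ 1) {p : Interp A → Prop} {ω : Interp A}
    (hp : p ω) : π ω ≤ poss π p :=
  le_csSup ⟨1, by rintro x ⟨ω', _, rfl⟩; exact h1 ω'⟩ ⟨ω, hp, rfl⟩

lemma necLit_nonneg {π : PossDist A} (h : IsPossDist π) (l : Lit A) : 0 ≤ necLit π l := by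
  have := poss_le (π := π) (p := fun ω => ¬ litSat ω l) zero_le_one
    (fun ω _ => (h ω).2)
  simp only [necLit, nec]; linarith

lemma necLit_le_one {π : PossDist A} (h : IsPossDist π) (l : Lit A) : necLit π l ≤ 1 := by
  have := poss_nonneg (π := π) (fun ω => (h ω).1) (fun ω => ¬ litSat ω l)
  simp only [necLit, nec]; linarith

lemma headNec_nonneg {π : PossDist A} (h : IsPossDist π) (o : Option (Lit A)) :
    0 ≤ headNec π o := by
  cases o with
  | none =>
    have := poss_le (π := π) (p := fun _ : Interp A => ¬ False) zero_le_one
      (fun ω _ => (h ω).2)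
    simp only [headNec, nec]; linarith
  | some l => exact necLit_nonneg h l

lemma inf_finite (f : Lit A → ℝ) (B : Finset (Lit A)) :
    (insert (1:ℝ) (f '' (↑B : Set (Lit A)))).Finite :=
  (B.finite_toSet.image f).insert 1

lemma inf_le_one (f : Lit A → ℝ) (B : Finset (Lit A)) :
    sInf (insert (1:ℝ) (f '' (↑B : Set (Lit A)))) ≤ 1 :=
  csInf_le (inf_finite f B).bddBelow (Set.mem_insert _ _)

lemma inf_le_elem (f : Lit A → ℝ) {B : Finset (Lit A)} {l : Lit A} (hl : l ∈ B) :
    sInf (insert (1:ℝ) (f '' (↑B : Set (Lit A)))) ≤ f l :=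
  csInf_le (inf_finite f B).bddBelow (Set.mem_insert_iff.2 (Or.inr ⟨l, hl, rfl⟩))

lemma lt_inf (f : Lit A → ℝ) {B : Finset (Lit A)} {b : ℝ} (h1 : b < 1)
    (h : ∀ l ∈ B, b < f l) : b < sInf (insert (1:ℝ) (f '' (↑B : Set (Lit A)))) := by
  have hne : (insert (1:ℝ) (f '' (↑B : Set (Lit A)))).Nonempty := ⟨1, Set.mem_insert _ _⟩
  rcases Set.mem_insert_iff.1 (hne.csInf_mem (inf_finite f B)) with h' | ⟨l, hl, h'⟩
  · rw [h']; exact h1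
  · rw [← h']; exact h l hl

lemma exists_model_not_sat {M : Set (Lit A)} (hcons : Consistent M) {l : Lit A}
    (hl : l ∉ M) : ∃ ω : Interp A, (∀ l' ∈ M, litSat ω l') ∧ ¬ litSat ω l := by
  classical
  obtain ⟨a0, b0⟩ := l
  refine ⟨fun a => if a = a0 then ! b0 else decide ((a, true) ∈ M), ?_, ?_⟩
  · rintro ⟨a, b⟩ hm
    simp only [litSat]
    by_cases ha : a = a0
    · subst ha
      have hbl : b ≠ b0 := fun h => hl (h ▸ hm)
      rw [if_pos rfl]
      cases b <;> cases b0 <;> simp_all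
    · rw [if_neg ha]
      cases b with
      | true => simp [hm]
      | false =>
        have : (a, true) ∉ M := fun h => hcons a ⟨h, hm⟩
        simp [this]
  · simp [litSat]

/-- Core maximality lemma: if `π' ∈ S_(P,V)` and `π' ω₀ > 0`, then the set `J` of
literals with necessity greater than `1 - π' ω₀` is satisfied by `ω₀`, is consistent,
and is a model of the reduct. -/
lemma max_aux {P : Set (NormalRule A)} {M : Set (Lit A)}
    {V : Lit A → ℝ} (hV : ∀ l : Lit A, V l = if l ∈ M then 1 else 0)
    {π' : PossDist A} (hπ' : π' ∈ possModelsV P V)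
    {ω₀ : Interp A} (hα : 0 < π' ω₀) :
    (∀ l ∈ {l : Lit A | 1 - π' ω₀ < necLit π' l}, litSat ω₀ l) ∧
    Consistent {l : Lit A | 1 - π' ω₀ < necLit π' l} ∧
    ∀ s ∈ reduct P M, ruleModel {l : Lit A | 1 - π' ω₀ < necLit π' l} s := by
  obtain ⟨hpd, hcon⟩ := hπ'
  set α := π' ω₀ with hαdef
  set J := {l : Lit A | 1 - α < necLit π' l} with hJ
  have hsat : ∀ l ∈ J, litSat ω₀ l := by
    intro l hl
    by_contra hns
    have h1 : α ≤ poss π' (fun ω => ¬ litSat ω l) := le_poss (fun ω => (hpd ω).2) hns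
    have h2 : 1 - α < necLit π' l := hl
    simp only [necLit, nec] at h2
    linarith
  refine ⟨hsat, ?_, ?_⟩
  · intro a ⟨h1, h2⟩
    have := hsat _ h1
    have := hsat _ h2
    simp_all [litSat]
  · rintro s ⟨r, hr, hneg, rfl⟩ hbody
    have hc := hcon r hr
    have hminb : 1 - α < minBody π' r.pos :=
      lt_inf _ (by linarith) (fun l hl => hbody (by simpa using hl))
    have hminn : 1 - α < minNeg V r.neg := by
      refine lt_inf _ (by linarith) (fun l hl => ?_)
      have : V l = 0 := by rw [hV l, if_neg (hneg l hl)]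
      rw [this]; linarith
    have hlt : 1 - α < headNec π' r.head :=
      lt_of_lt_of_le (lt_min hminb hminn) hc
    cases hh : r.head with
    | none =>
      exfalso
      have h1 : α ≤ poss π' (fun _ => ¬ False) :=
        le_poss (fun ω => (hpd ω).2) (p := fun _ => ¬ False) (not_false)
      rw [hh] at hlt
      simp only [headNec, nec] at hlt
      linarith
    | some l =>
      refine ⟨l, rfl, ?_⟩
      rw [hh] at hlt
      exact hlt

end Aux

/-- if `M` is an answer set of the normal program `P` and `V` is the
valuation with `V(l) = 1` iff `l ∈ M` (and 0 otherwise), then there is a minimally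
specific possibilistic model `π ∈ S_(P,V)` with `V(l) = N(l)` for every literal `l`. -/
theorem stmt4 {A : Type} [Fintype A] (P : Set (NormalRule A)) (M : Set (Lit A))
    (hM : NormalAnswerSet P M) (V : Lit A → ℝ)
    (hV : ∀ l : Lit A, V l = if l ∈ M then 1 else 0) :
    ∃ π : PossDist A, MinSpecific (possModelsV P V) π ∧
      ∀ l : Lit A, V l = necLit π l := by
  classical
  obtain ⟨hModel, hMin⟩ := hM
  by_cases hA : Consistent M ∧ ∀ r ∈ reduct P M, ruleModel M r
  · obtain ⟨hcons, hrules⟩ := hA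
    set π : PossDist A := fun ω => if ∀ l ∈ M, litSat ω l then 1 else 0 with hπdef
    have hpd : IsPossDist π := by
      intro ω; simp only [hπdef]; split_ifs <;> norm_num
    have hNec : ∀ l : Lit A, necLit π l = V l := by
      intro l
      rw [hV l]
      by_cases hl : l ∈ M
      · rw [if_pos hl]
        have h1 : poss π (fun ω => ¬ litSat ω l) ≤ 0 := by
          refine poss_le le_rfl (fun ω hω => ?_)
          have hns : ¬ ∀ l' ∈ M, litSat ω l' := fun h => hω (h l hl)
          simp only [hπdef]
          rw [if_neg hns]
        have h2 : 0 ≤ poss π (fun ω => ¬ litSat ω l) :=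
          poss_nonneg (fun ω => (hpd ω).1) _
        simp only [necLit, nec]
        linarith [le_antisymm h1 h2]
      · rw [if_neg hl]
        obtain ⟨ω, hω1, hω2⟩ := exists_model_not_sat hcons hl
        have hπω : π ω = 1 := if_pos hω1
        have h1 : (1:ℝ) ≤ poss π (fun ω => ¬ litSat ω l) := by
          have := le_poss (π := π) (fun ω => (hpd ω).2) (p := fun ω => ¬ litSat ω l) hω2
          rwa [hπω] at this
        have h2 : poss π (fun ω => ¬ litSat ω l) ≤ 1 :=
          poss_le zero_le_one (fun ω _ => (hpd ω).2)
        simp only [necLit, nec]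
        linarith [le_antisymm h2 h1]
    refine ⟨π, ⟨⟨hpd, fun r hr => ?_⟩, ?_⟩, fun l => (hNec l).symm⟩
    · -- constraints
      by_cases hpos : (↑r.pos : Set (Lit A)) ⊆ M
      · by_cases hneg : ∀ l ∈ r.neg, l ∉ M
        · have hred : (⟨r.head, r.pos⟩ : SimpleRule A) ∈ reduct P M := ⟨r, hr, hneg, rfl⟩
          obtain ⟨l, hl1, hl2⟩ := hrules _ hred hpos
          have hh : headNec π r.head = 1 := by
            rw [show r.head = some l from hl1]
            show necLit π l = 1
            rw [hNec l, hV l, if_pos hl2]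
          rw [normalConstraint, hh]
          exact le_trans (min_le_left _ _) (inf_le_one _ _)
        · push_neg at hneg
          obtain ⟨l, hl1, hl2⟩ := hneg
          have h1 : minNeg V r.neg ≤ 1 - V l := inf_le_elem _ hl1
          have h2 : V l = 1 := by rw [hV l, if_pos hl2]
          calc min (minBody π r.pos) (minNeg V r.neg) ≤ minNeg V r.neg := min_le_right _ _
            _ ≤ 0 := by linarith
            _ ≤ headNec π r.head := headNec_nonneg hpd r.head
      · rw [Set.not_subset] at hpos
        obtain ⟨l, hl1, hl2⟩ := hpos
        have h1 : minBody π r.pos ≤ necLit π l := inf_le_elem _ (Finset.mem_coe.1 hl1)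
        have h2 : necLit π l = 0 := by rw [hNec l, hV l, if_neg hl2]
        calc min (minBody π r.pos) (minNeg V r.neg) ≤ minBody π r.pos := min_le_left _ _
          _ ≤ 0 := by linarith
          _ ≤ headNec π r.head := headNec_nonneg hpd r.head
    · -- maximality
      intro π' hπ' hle
      by_contra hne
      have hex : ∃ ω₀, π' ω₀ ≠ π ω₀ := by
        by_contra h; push_neg at h; exact hne (funext h)
      obtain ⟨ω₀, hω₀⟩ := hex
      have hπω₀ : ¬ ∀ l ∈ M, litSat ω₀ l := by
        intro h
        have h1 : π ω₀ = 1 := if_pos h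
        have h2 := hle ω₀
        have h3 := (hπ'.1 ω₀).2
        apply hω₀
        rw [h1] at h2 ⊢
        linarith
      have hπ0 : π ω₀ = 0 := if_neg hπω₀
      have hα : 0 < π' ω₀ := by
        have := hle ω₀
        rw [hπ0] at this hω₀
        exact lt_of_le_of_ne this (Ne.symm hω₀)
      obtain ⟨hsatJ, hJcons, hJrules⟩ := max_aux hV hπ' hα
      have hJM : {l : Lit A | 1 - π' ω₀ < necLit π' l} ⊆ M := by
        intro l hlJ
        by_contra hlM
        obtain ⟨ω, hω1, hω2⟩ := exists_model_not_sat hcons hlM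
        have hπω : π ω = 1 := if_pos hω1
        have h2 := le_poss (π := π') (fun ω => (hπ'.1 ω).2) (p := fun ω => ¬ litSat ω l) hω2
        have h3 : (1:ℝ) ≤ π' ω := by rw [← hπω]; exact hle ω
        have h5 : 1 - π' ω₀ < necLit π' l := hlJ
        have h6 := (hπ'.1 ω₀).2
        simp only [necLit, nec] at h5
        linarith
      have hJeq := hMin _ (Or.inl ⟨hJcons, hJrules⟩) hJM
      exact hπω₀ (fun l hl => hsatJ l (hJeq ▸ hl))
  · have huniv : M = Set.univ := by
      rcases hModel with h | h
      · exact absurd h hA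
      · exact h
    set π : PossDist A := fun _ => (0:ℝ) with hπdef
    have hpd : IsPossDist π := fun ω => by norm_num [hπdef]
    have hposs0 : ∀ p : Interp A → Prop, poss π p ≤ 0 :=
      fun p => poss_le le_rfl (fun ω _ => le_rfl)
    have hhead : ∀ o : Option (Lit A), (1:ℝ) ≤ headNec π o := by
      intro o
      cases o with
      | none =>
        have := hposs0 (fun _ => ¬ False)
        simp only [headNec, nec]
        linarith
      | some l =>
        have := hposs0 (fun ω => ¬ litSat ω l)
        simp only [headNec, necLit, nec]
        linarith
    by_cases hc : Consistent M
    · -- A is empty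
      have hempty : ∀ a : A, False := by
        intro a
        exact hc a ⟨by rw [huniv]; trivial, by rw [huniv]; trivial⟩
      have hB : ∀ B : Finset (Lit A), B = ∅ :=
        fun B => Finset.eq_empty_of_forall_notMem (fun l _ => (hempty l.1).elim)
      have hH : ∀ o : Option (Lit A), o = none := by
        intro o
        cases o with
        | none => rfl
        | some l => exact (hempty l.1).elim
      have hinf : ∀ f : Lit A → ℝ, sInf (insert (1:ℝ) (f '' (↑(∅ : Finset (Lit A)) : Set (Lit A)))) = 1 := by
        intro f; simp
      have hviol : ∃ s ∈ reduct P M, ¬ ruleModel M s := by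
        by_contra h; push_neg at h; exact hA ⟨hc, h⟩
      obtain ⟨s, hs, _⟩ := hviol
      obtain ⟨r, hr, hneg, rfl⟩ := hs
      refine ⟨π, ⟨⟨hpd, fun r' hr' => ?_⟩, ?_⟩, fun l => (hempty l.1).elim⟩
      · rw [normalConstraint]
        have h1 : minBody π r'.pos ≤ 1 := inf_le_one _ _
        calc min (minBody π r'.pos) (minNeg V r'.neg) ≤ minBody π r'.pos := min_le_left _ _
          _ ≤ 1 := h1
          _ ≤ headNec π r'.head := hhead _
      · intro π' hπ' _
        funext ω
        have hcon := hπ'.2 r hr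
        rw [normalConstraint, hB r.pos, hB r.neg, hH r.head] at hcon
        have h1 : minBody π' (∅ : Finset (Lit A)) = 1 := hinf _
        have h2 : minNeg V (∅ : Finset (Lit A)) = 1 := hinf _
        rw [h1, h2] at hcon
        have h3 : headNec π' none = 1 - poss π' (fun _ => ¬ False) := rfl
        rw [h3] at hcon
        have h4 : π' ω ≤ poss π' (fun _ => ¬ False) :=
          le_poss (fun ω => (hπ'.1 ω).2) (p := fun _ => ¬ False) not_false
        have h5 := (hπ'.1 ω).1
        have h6 : min (1:ℝ) 1 = 1 := min_self 1
        rw [h6] at hcon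
        show π' ω = π ω
        simp only [hπdef]
        linarith
    · -- M inconsistent
      have hNec : ∀ l : Lit A, necLit π l = V l := by
        intro l
        have hlM : l ∈ M := by rw [huniv]; trivial
        rw [hV l, if_pos hlM]
        have h1 := hposs0 (fun ω => ¬ litSat ω l)
        have h2 : 0 ≤ poss π (fun ω => ¬ litSat ω l) :=
          poss_nonneg (fun ω => (hpd ω).1) _
        simp only [necLit, nec]
        linarith
      refine ⟨π, ⟨⟨hpd, fun r hr => ?_⟩, ?_⟩, fun l => (hNec l).symm⟩
      · rw [normalConstraint]
        calc min (minBody π r.pos) (minNeg V r.neg) ≤ minBody π r.pos := min_le_left _ _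
          _ ≤ 1 := inf_le_one _ _
          _ ≤ headNec π r.head := hhead _
      · intro π' hπ' hle
        by_contra hne
        have hex : ∃ ω₀, π' ω₀ ≠ π ω₀ := by
          by_contra h; push_neg at h; exact hne (funext h)
        obtain ⟨ω₀, hω₀⟩ := hex
        have hα : 0 < π' ω₀ := by
          have h1 := (hπ'.1 ω₀).1
          have h2 : π ω₀ = 0 := rfl
          rw [h2] at hω₀
          exact lt_of_le_of_ne h1 (Ne.symm hω₀)
        obtain ⟨hsatJ, hJcons, hJrules⟩ := max_aux hV hπ' hα
        have hJM : {l : Lit A | 1 - π' ω₀ < necLit π' l} ⊆ M := by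
          rw [huniv]; exact Set.subset_univ _
        have hJeq := hMin _ (Or.inl ⟨hJcons, hJrules⟩) hJM
        exact hc (hJeq ▸ hJcons)

end PASP
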